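/- arXiv:2503.14759 — 2 statements merged into one kernel-verified Lean document; each statement's English description precedes it below -/
import Mathlib

section
/- (Birkel's covariance inequality) Let {Y_j}_{j∈I} be a finite collection of positively associated random variables, A, B ⊆ I, and Φ₁ : ℝ^{|A|} → ℝ, Φ₂ : ℝ^{|B|} → ℝ functions with bounded first-order partial derivatives. Then |Cov(Φ₁(Y_i, i∈A), Φ₂(Y_j, j∈B))| ≤ Σ_{i∈A} Σ_{j∈B} ‖∂Φ₁/∂t_i‖_∞ · ‖∂Φ₂/∂t_j‖_∞ · Cov(Y_i, Y_j). -/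
/-!
If every partial derivative of `Φ` is bounded by `D i`, the function `x ↦ ∑ D i x i + σ Φ x`
is nondecreasing in each coordinate for `σ = ±1`, hence nondecreasing. With `L = ∑ D i Y i`,
positive association therefore makes all four covariances `Cov(L₁ ± Φ₁(Y), L₂ ± Φ₂(Y))`
nonnegative; adding them in pairs gives `±Cov(Φ₁(Y), Φ₂(Y)) ≤ Cov(L₁, L₂)`, and bilinearity
expands `Cov(L₁, L₂)` into the double sum.
-/

open MeasureTheory ProbabilityTheory

/-- Covariance of two real random variables. -/
noncomputable def cov {Ω : Type*} [MeasurableSpace Ω] (μ : Measure Ω) (U V : Ω → ℝ) : ℝ :=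
  (∫ ω, U ω * V ω ∂μ) - (∫ ω, U ω ∂μ) * (∫ ω, V ω ∂μ)

/-- A finite family of random variables is positively associated. -/
def PosAssoc {Ω : Type*} [MeasurableSpace Ω] (μ : Measure Ω) {ι : Type*} [Fintype ι]
    (X : ι → Ω → ℝ) : Prop :=
  ∀ Φ₁ Φ₂ : (ι → ℝ) → ℝ,
    (∀ x y : ι → ℝ, (∀ i, x i ≤ y i) → Φ₁ x ≤ Φ₁ y) →
    (∀ x y : ι → ℝ, (∀ i, x i ≤ y i) → Φ₂ x ≤ Φ₂ y) →
    MemLp (fun ω => Φ₁ (fun i => X i ω)) 2 μ →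
    MemLp (fun ω => Φ₂ (fun i => X i ω)) 2 μ →
    0 ≤ cov μ (fun ω => Φ₁ (fun i => X i ω)) (fun ω => Φ₂ (fun i => X i ω))

open Function

section CoordinatewiseMonotone

variable {ι : Type*} [Fintype ι] [DecidableEq ι]

theorem monotone_of_monotone_update {f : (ι → ℝ) → ℝ}
    (h : ∀ (x : ι → ℝ) (k : ι), Monotone fun s => f (update x k s)) : Monotone f := by
  intro x y hxy
  have key : ∀ s : Finset ι, f x ≤ f (s.piecewise y x) := by
    intro s
    induction s using Finset.induction_on with
    | empty => simp
    | insert k s hk ih =>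
      calc f x ≤ f (s.piecewise y x) := ih
        _ = f (update (s.piecewise y x) k (x k)) := by
          rw [← Finset.piecewise_eq_of_notMem s y x hk, update_eq_self]
        _ ≤ f (update (s.piecewise y x) k (y k)) := h _ k (hxy k)
        _ = f ((insert k s).piecewise y x) := by rw [Finset.piecewise_insert]
  simpa using key Finset.univ

theorem monotone_sum_mul_add_mul {A : Finset ι} {Φ : (ι → ℝ) → ℝ} {dΦ : (ι → ℝ) → ι → ℝ}
    {D : ι → ℝ} {σ : ℝ} (hσ : |σ| ≤ 1)
    (hA : ∀ x y : ι → ℝ, (∀ i ∈ A, x i = y i) → Φ x = Φ y)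
    (hd : ∀ (x : ι → ℝ) (i : ι), i ∈ A →
      HasDerivAt (fun s => Φ (update x i s)) (dΦ x i) (x i))
    (hb : ∀ (x : ι → ℝ) (i : ι), i ∈ A → |dΦ x i| ≤ D i) :
    Monotone fun x => ∑ i ∈ A, D i * x i + σ * Φ x := by
  refine monotone_of_monotone_update fun x k => ?_
  by_cases hk : k ∈ A
  · have hlin : ∀ s, HasDerivAt (fun s => ∑ i ∈ A, D i * update x k s i) (D k) s := by
      intro s
      have := HasDerivAt.fun_sum fun i (_ : i ∈ A) =>
        (hasDerivAt_pi.1 (hasDerivAt_update x k s) i).const_mul (D i)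
      simpa [Pi.single_apply, hk] using this
    have hΦ : ∀ s, HasDerivAt (fun s => σ * Φ (update x k s)) (σ * dΦ (update x k s) k) s :=
      fun s => by simpa using (hd (update x k s) k hk).const_mul σ
    refine monotone_of_hasDerivAt_nonneg (f' := fun s => D k + σ * dΦ (update x k s) k)
      (fun s => (hlin s).add (hΦ s)) fun s => ?_
    have hbound : |σ * dΦ (update x k s) k| ≤ D k := by
      rw [abs_mul]
      exact (mul_le_of_le_one_left (abs_nonneg _) hσ).trans (hb _ k hk)
    show 0 ≤ D k + σ * dΦ (update x k s) k
    linarith [neg_abs_le (σ * dΦ (update x k s) k)]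
  · have hne : ∀ i ∈ A, i ≠ k := fun i hi hik => hk (hik ▸ hi)
    have hconst : ∀ s, ∑ i ∈ A, D i * update x k s i + σ * Φ (update x k s)
        = ∑ i ∈ A, D i * x i + σ * Φ x := fun s => by
      rw [hA _ x fun i hi => update_of_ne (hne i hi) _ _]
      congr 1
      exact Finset.sum_congr rfl fun i hi => by rw [update_of_ne (hne i hi)]
    simp only [hconst]
    exact monotone_const

end CoordinatewiseMonotone

section Covariance

variable {Ω : Type*} [MeasurableSpace Ω] {μ : Measure Ω} [IsProbabilityMeasure μ]

theorem cov_eq_covariance {U V : Ω → ℝ} (hU : MemLp U 2 μ) (hV : MemLp V 2 μ) :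
    cov μ U V = covariance U V μ :=
  (covariance_eq_sub hU hV).symm

theorem PosAssoc.covariance_nonneg {ι : Type*} [Fintype ι] {X : ι → Ω → ℝ}
    (hX : PosAssoc μ X) {F G : (ι → ℝ) → ℝ} (hF : Monotone F) (hG : Monotone G)
    (hF2 : MemLp (fun ω => F fun i => X i ω) 2 μ) (hG2 : MemLp (fun ω => G fun i => X i ω) 2 μ) :
    0 ≤ covariance (fun ω => F fun i => X i ω) (fun ω => G fun i => X i ω) μ :=
  cov_eq_covariance hF2 hG2 ▸ hX F G hF hG hF2 hG2

theorem abs_covariance_le_of_covariance_add_nonneg {U₁ U₂ L₁ L₂ : Ω → ℝ}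
    (hU₁ : MemLp U₁ 2 μ) (hU₂ : MemLp U₂ 2 μ) (hL₁ : MemLp L₁ 2 μ) (hL₂ : MemLp L₂ 2 μ)
    (h : ∀ σ ∈ ({1, -1} : Set ℝ), ∀ τ ∈ ({1, -1} : Set ℝ),
      0 ≤ covariance (L₁ + σ • U₁) (L₂ + τ • U₂) μ) :
    |covariance U₁ U₂ μ| ≤ covariance L₁ L₂ μ := by
  have expand : ∀ σ τ : ℝ, covariance (L₁ + σ • U₁) (L₂ + τ • U₂) μ
      = covariance L₁ L₂ μ + τ * covariance L₁ U₂ μ + σ * covariance U₁ L₂ μ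
        + σ * τ * covariance U₁ U₂ μ := fun σ τ => by
    have hσ := hU₁.const_smul σ
    have hτ := hU₂.const_smul τ
    rw [covariance_add_left hL₁ hσ (hL₂.add hτ), covariance_add_right hL₁ hL₂ hτ,
      covariance_add_right hσ hL₂ hτ]
    simp only [covariance_smul_left, covariance_smul_right]
    ring
  have hpp := h 1 (by simp) 1 (by simp)
  have hmm := h (-1) (by simp) (-1) (by simp)
  have hpm := h 1 (by simp) (-1) (by simp)
  have hmp := h (-1) (by simp) 1 (by simp)
  rw [expand] at hpp hmm hpm hmp
  exact abs_le.2 ⟨by linarith, by linarith⟩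

end Covariance

theorem birkel_covariance_inequality_general
    {Ω : Type*} [MeasurableSpace Ω] (μ : Measure Ω) [IsProbabilityMeasure μ]
    {ι : Type*} [Fintype ι] [DecidableEq ι] (Y : ι → Ω → ℝ)
    (hY : PosAssoc μ Y)
    (hY2 : ∀ i, MemLp (Y i) 2 μ)
    (A B : Finset ι)
    (Φ₁ Φ₂ : (ι → ℝ) → ℝ)
    (hA : ∀ x y : ι → ℝ, (∀ i ∈ A, x i = y i) → Φ₁ x = Φ₁ y)
    (hB : ∀ x y : ι → ℝ, (∀ j ∈ B, x j = y j) → Φ₂ x = Φ₂ y)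
    (dΦ₁ dΦ₂ : (ι → ℝ) → ι → ℝ) (D₁ D₂ : ι → ℝ)
    (hd₁ : ∀ (x : ι → ℝ) (i : ι), i ∈ A →
      HasDerivAt (fun s => Φ₁ (Function.update x i s)) (dΦ₁ x i) (x i))
    (hd₂ : ∀ (x : ι → ℝ) (j : ι), j ∈ B →
      HasDerivAt (fun s => Φ₂ (Function.update x j s)) (dΦ₂ x j) (x j))
    (hb₁ : ∀ (x : ι → ℝ) (i : ι), i ∈ A → |dΦ₁ x i| ≤ D₁ i)
    (hb₂ : ∀ (x : ι → ℝ) (j : ι), j ∈ B → |dΦ₂ x j| ≤ D₂ j)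
    (hΦ₁2 : MemLp (fun ω => Φ₁ (fun i => Y i ω)) 2 μ)
    (hΦ₂2 : MemLp (fun ω => Φ₂ (fun i => Y i ω)) 2 μ) :
    |cov μ (fun ω => Φ₁ (fun i => Y i ω)) (fun ω => Φ₂ (fun j => Y j ω))|
      ≤ ∑ i ∈ A, ∑ j ∈ B, D₁ i * D₂ j * cov μ (Y i) (Y j) := by
  set L₁ : Ω → ℝ := fun ω => ∑ i ∈ A, D₁ i * Y i ω
  set L₂ : Ω → ℝ := fun ω => ∑ j ∈ B, D₂ j * Y j ω
  have hL₁ : MemLp L₁ 2 μ := memLp_finsetSum A fun i _ => (hY2 i).const_mul (D₁ i)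
  have hL₂ : MemLp L₂ 2 μ := memLp_finsetSum B fun j _ => (hY2 j).const_mul (D₂ j)
  have hsign : ∀ σ ∈ ({1, -1} : Set ℝ), |σ| ≤ 1 := by
    rintro σ (rfl | rfl) <;> simp
  have key : ∀ σ ∈ ({1, -1} : Set ℝ), ∀ τ ∈ ({1, -1} : Set ℝ),
      0 ≤ covariance (L₁ + σ • fun ω => Φ₁ fun i => Y i ω)
        (L₂ + τ • fun ω => Φ₂ fun j => Y j ω) μ := fun σ hσ τ hτ =>
    hY.covariance_nonneg (monotone_sum_mul_add_mul (hsign σ hσ) hA hd₁ hb₁)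
      (monotone_sum_mul_add_mul (hsign τ hτ) hB hd₂ hb₂)
      (hL₁.add (hΦ₁2.const_mul σ)) (hL₂.add (hΦ₂2.const_mul τ))
  rw [cov_eq_covariance hΦ₁2 hΦ₂2]
  calc _ ≤ covariance L₁ L₂ μ := abs_covariance_le_of_covariance_add_nonneg hΦ₁2 hΦ₂2 hL₁ hL₂ key
    _ = ∑ i ∈ A, ∑ j ∈ B, D₁ i * D₂ j * cov μ (Y i) (Y j) := by
      rw [covariance_fun_sum_fun_sum' (fun i _ => (hY2 i).const_mul (D₁ i))
        (fun j _ => (hY2 j).const_mul (D₂ j))]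
      refine Finset.sum_congr rfl fun i _ => Finset.sum_congr rfl fun j _ => ?_
      rw [covariance_const_mul_left, covariance_const_mul_right,
        cov_eq_covariance (hY2 i) (hY2 j)]
      ring

/-- **Birkel's covariance inequality.** If `{Y j}` is a positively associated family,
`Φ₁` depends only on coordinates in `A`, `Φ₂` only on coordinates in `B`, and both have
partial derivatives bounded by `D₁ i` (resp. `D₂ j`), then
`|Cov(Φ₁(Y), Φ₂(Y))| ≤ Σ_{i∈A} Σ_{j∈B} D₁ i · D₂ j · Cov(Y i, Y j)`. -/
theorem birkel_covariance_inequality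
    {Ω : Type*} [MeasurableSpace Ω] (μ : Measure Ω) [IsProbabilityMeasure μ]
    {ι : Type*} [Fintype ι] [DecidableEq ι] (Y : ι → Ω → ℝ)
    (hY : PosAssoc μ Y) (hmY : ∀ i, Measurable (Y i))
    (hY2 : ∀ i, MemLp (Y i) 2 μ)
    (A B : Finset ι)
    (Φ₁ Φ₂ : (ι → ℝ) → ℝ)
    (hA : ∀ x y : ι → ℝ, (∀ i ∈ A, x i = y i) → Φ₁ x = Φ₁ y)
    (hB : ∀ x y : ι → ℝ, (∀ j ∈ B, x j = y j) → Φ₂ x = Φ₂ y)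
    (dΦ₁ dΦ₂ : (ι → ℝ) → ι → ℝ) (D₁ D₂ : ι → ℝ)
    (hd₁ : ∀ (x : ι → ℝ) (i : ι), i ∈ A →
      HasDerivAt (fun s => Φ₁ (Function.update x i s)) (dΦ₁ x i) (x i))
    (hd₂ : ∀ (x : ι → ℝ) (j : ι), j ∈ B →
      HasDerivAt (fun s => Φ₂ (Function.update x j s)) (dΦ₂ x j) (x j))
    (hb₁ : ∀ (x : ι → ℝ) (i : ι), i ∈ A → |dΦ₁ x i| ≤ D₁ i)
    (hb₂ : ∀ (x : ι → ℝ) (j : ι), j ∈ B → |dΦ₂ x j| ≤ D₂ j)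
    (hΦ₁2 : MemLp (fun ω => Φ₁ (fun i => Y i ω)) 2 μ)
    (hΦ₂2 : MemLp (fun ω => Φ₂ (fun i => Y i ω)) 2 μ) :
    |cov μ (fun ω => Φ₁ (fun i => Y i ω)) (fun ω => Φ₂ (fun j => Y j ω))|
      ≤ ∑ i ∈ A, ∑ j ∈ B, D₁ i * D₂ j * cov μ (Y i) (Y j) :=
  birkel_covariance_inequality_general μ Y hY hY2 A B Φ₁ Φ₂ hA hB dΦ₁ dΦ₂ D₁ D₂ hd₁ hd₂ hb₁ hb₂ hΦ₁2
    hΦ₂2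
end

section
/- Let f, F ∈ C²(ℝ) with F' = f, F(x) < 1 at a fixed point x, λ = f/(1−F), and k a density with ∫ s k(s) ds = 0 and ∫ s² k(s) ds < ∞. Define the smoothed quantities f_h(x) = ∫ k(t) f(x − th) dt and F_h(x) = ∫ k(t) F(x − th) dt. Then as h → 0⁺, f_h(x)/(1−F_h(x)) − λ(x) = (h²/2)·[λ''(x) − 2λ'(x)F'(x)/(1−F(x))]·∫ t²k(t) dt + o(h²). -/
/-!
Write `g (x - u) = g x - u g'(x) + (u²/2) g''(x) + u² R(u)`. The normalized Taylor remainder `R`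
is bounded by `2 sup |g''|` and tends to `0` at `0`, so integrating against `k` and using dominated
convergence gives `g_h(x) = g(x) + h² g''(x) μ₂ / 2 + o(h²)` with `μ₂ = ∫ t² k(t) dt`, for `g = f`
and `g = F`; the first-order term drops out because `k` has mean zero. Expanding the quotient
`A / B` to first order in `h²` gives the coefficient `(f'' + λ F'') μ₂ / (2 (1 - F))`, and
differentiating `f = λ (1 - F)` twice shows that it equals the stated one.
-/

open MeasureTheory Filter Topology Asymptotics Metric

lemma abs_le_mul_sq_of_hasDerivAt_of_hasDerivAt {ψ ψ' ψ'' : ℝ → ℝ} {u ε : ℝ}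
    (hψ : ∀ v, HasDerivAt ψ (ψ' v) v) (hψ' : ∀ v, HasDerivAt ψ' (ψ'' v) v)
    (h₀ : ψ 0 = 0) (h₀' : ψ' 0 = 0) (hε : ∀ v, |v| ≤ |u| → |ψ'' v| ≤ ε) :
    |ψ u| ≤ ε * u ^ 2 := by
  have hmem : ∀ {v : ℝ}, v ∈ closedBall (0 : ℝ) |u| ↔ |v| ≤ |u| := mem_closedBall_zero_iff
  have h0 : (0 : ℝ) ∈ closedBall 0 |u| := mem_closedBall_self (abs_nonneg u)
  have hu : u ∈ closedBall (0 : ℝ) |u| := hmem.2 le_rfl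
  have hψ'_le : ∀ v ∈ closedBall (0 : ℝ) |u|, ‖ψ' v‖ ≤ ε * |u| := fun v hv => by
    have := (convex_closedBall (0 : ℝ) |u|).norm_image_sub_le_of_norm_hasDerivWithin_le
      (fun w _ => (hψ' w).hasDerivWithinAt) (fun w hw => hε w (hmem.1 hw)) h0 hv
    rw [h₀', sub_zero, sub_zero] at this
    have hε₀ : 0 ≤ ε := (abs_nonneg _).trans (hε 0 (by simp))
    exact this.trans (mul_le_mul_of_nonneg_left (hmem.1 hv) hε₀)
  have := (convex_closedBall (0 : ℝ) |u|).norm_image_sub_le_of_norm_hasDerivWithin_le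
    (fun w _ => (hψ w).hasDerivWithinAt) hψ'_le h0 hu
  rw [h₀, sub_zero, sub_zero, Real.norm_eq_abs, Real.norm_eq_abs, mul_assoc, ← sq, sq_abs] at this
  exact this

noncomputable def taylorRemainderRatio (g : ℝ → ℝ) (x u : ℝ) : ℝ :=
  (g (x - u) - g x + u * deriv g x - u ^ 2 / 2 * deriv (deriv g) x) / u ^ 2

section TaylorRemainderRatio

variable {g : ℝ → ℝ} {x : ℝ}

lemma taylorRemainderRatio_zero : taylorRemainderRatio g x 0 = 0 := by
  simp [taylorRemainderRatio]

lemma eq_add_taylorRemainderRatio (u : ℝ) :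
    g (x - u) = g x - u * deriv g x + u ^ 2 / 2 * deriv (deriv g) x
      + u ^ 2 * taylorRemainderRatio g x u := by
  rcases eq_or_ne u 0 with rfl | hu
  · simp [taylorRemainderRatio_zero]
  · rw [taylorRemainderRatio, mul_div_cancel₀ _ (pow_ne_zero 2 hu)]
    ring

lemma abs_taylorRemainderRatio_le (hg : Differentiable ℝ g) (hg' : Differentiable ℝ (deriv g))
    {u ε : ℝ} (hε : ∀ y, |y - x| ≤ |u| → |deriv (deriv g) y - deriv (deriv g) x| ≤ ε) :
    |taylorRemainderRatio g x u| ≤ ε := by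
  have hψ : ∀ v, HasDerivAt (fun v => g (x - v) - g x + v * deriv g x
      - v ^ 2 / 2 * deriv (deriv g) x) (deriv g x - deriv g (x - v) - v * deriv (deriv g) x) v :=
    fun v => (((((hg (x - v)).hasDerivAt.comp_const_sub x v).sub_const (g x)).add
      ((hasDerivAt_id' v).mul_const _)).sub
      (((hasDerivAt_pow 2 v).div_const 2).mul_const _)).congr_deriv (by norm_num; ring)
  have hψ' : ∀ v, HasDerivAt (fun v => deriv g x - deriv g (x - v) - v * deriv (deriv g) x)
      (deriv (deriv g) (x - v) - deriv (deriv g) x) v :=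
    fun v => ((((hg' (x - v)).hasDerivAt.comp_const_sub x v).const_sub _).sub
      ((hasDerivAt_id' v).mul_const _)).congr_deriv (by ring)
  have key := abs_le_mul_sq_of_hasDerivAt_of_hasDerivAt hψ hψ' (by simp) (by simp)
    (fun v hv => hε (x - v) (by rwa [sub_sub_cancel_left, abs_neg]))
  rcases eq_or_ne u 0 with rfl | hu
  · simpa [taylorRemainderRatio_zero] using (abs_nonneg _).trans (hε x (by simp))
  · have hu2 : 0 < u ^ 2 := by positivity
    rwa [taylorRemainderRatio, abs_div, abs_of_pos hu2, div_le_iff₀ hu2]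

lemma tendsto_taylorRemainderRatio (hg : Differentiable ℝ g) (hg' : Differentiable ℝ (deriv g))
    (hc : ContinuousAt (deriv (deriv g)) x) :
    Tendsto (taylorRemainderRatio g x) (𝓝 0) (𝓝 0) := by
  rw [Metric.tendsto_nhds]
  intro ε hε
  obtain ⟨δ, hδ, hcδ⟩ := Metric.continuousAt_iff.mp hc (ε / 2) (half_pos hε)
  filter_upwards [ball_mem_nhds 0 hδ] with u hu
  rw [Real.dist_0_eq_abs]
  refine (abs_taylorRemainderRatio_le hg hg' fun y hy => (hcδ ?_).le).trans_lt (half_lt_self hε)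
  rw [mem_ball_zero_iff, Real.norm_eq_abs] at hu
  rw [Real.dist_eq]
  exact hy.trans_lt hu

lemma abs_taylorRemainderRatio_le_two_mul (hg : Differentiable ℝ g)
    (hg' : Differentiable ℝ (deriv g)) {M : ℝ} (hM : ∀ y, |deriv (deriv g) y| ≤ M) (u : ℝ) :
    |taylorRemainderRatio g x u| ≤ 2 * M :=
  abs_taylorRemainderRatio_le hg hg' fun y _ =>
    (abs_sub _ _).trans (by linarith [hM y, hM x])

lemma measurable_taylorRemainderRatio (hg : Continuous g) :
    Measurable (taylorRemainderRatio g x) := by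
  unfold taylorRemainderRatio
  have := hg.measurable
  fun_prop

end TaylorRemainderRatio

section Smoothing

variable {g k : ℝ → ℝ} (x : ℝ)

lemma integral_mul_comp_sub_sub_eq_integral_taylorRemainderRatio (hg : ContDiff ℝ 2 g) {M : ℝ}
    (hM : ∀ y, |deriv (deriv g) y| ≤ M) (hk : Integrable k) (hk_one : ∫ s, k s = 1)
    (hk_m1_int : Integrable (fun s => s * k s)) (hk_m1 : ∫ s, s * k s = 0)
    (hk_m2_int : Integrable (fun s => s ^ 2 * k s)) (h : ℝ) :
    (∫ t, k t * g (x - t * h)) - g x - h ^ 2 * (deriv (deriv g) x * (∫ t, t ^ 2 * k t) / 2)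
      = h ^ 2 * ∫ t, taylorRemainderRatio g x (t * h) * (t ^ 2 * k t) := by
  have hg1 := hg.differentiable two_ne_zero
  have hR : Integrable (fun t => taylorRemainderRatio g x (t * h) * (t ^ 2 * k t)) :=
    hk_m2_int.bdd_mul ((measurable_taylorRemainderRatio hg1.continuous).comp
      (measurable_id.mul_const h)).aestronglyMeasurable (Eventually.of_forall fun t =>
        abs_taylorRemainderRatio_le_two_mul hg1 hg.differentiable_deriv_two hM _)
  have hsplit : (fun t => k t * g (x - t * h)) = fun t =>
      g x * k t - h * deriv g x * (t * k t) + h ^ 2 / 2 * deriv (deriv g) x * (t ^ 2 * k t)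
        + h ^ 2 * (taylorRemainderRatio g x (t * h) * (t ^ 2 * k t)) := by
    ext t
    rw [eq_add_taylorRemainderRatio (g := g) (x := x) (t * h)]
    ring
  have hk₀ : Integrable (fun t => g x * k t) := hk.const_mul _
  have hk₁ : Integrable (fun t => h * deriv g x * (t * k t)) := hk_m1_int.const_mul _
  have hk₂ : Integrable (fun t => h ^ 2 / 2 * deriv (deriv g) x * (t ^ 2 * k t)) :=
    hk_m2_int.const_mul _
  have hk₀₁ : Integrable (fun t => g x * k t - h * deriv g x * (t * k t)) := hk₀.sub hk₁
  have hk₀₁₂ : Integrable (fun t => g x * k t - h * deriv g x * (t * k t)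
      + h ^ 2 / 2 * deriv (deriv g) x * (t ^ 2 * k t)) := hk₀₁.add hk₂
  rw [hsplit, integral_add hk₀₁₂ (hR.const_mul _), integral_add hk₀₁ hk₂, integral_sub hk₀ hk₁]
  simp only [integral_const_mul, hk_one, hk_m1]
  ring

lemma tendsto_integral_taylorRemainderRatio (hg : ContDiff ℝ 2 g) {M : ℝ}
    (hM : ∀ y, |deriv (deriv g) y| ≤ M) (hk_m2_int : Integrable (fun s => s ^ 2 * k s)) :
    Tendsto (fun h => ∫ t, taylorRemainderRatio g x (t * h) * (t ^ 2 * k t)) (𝓝 0) (𝓝 0) := by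
  have hg1 := hg.differentiable two_ne_zero
  have hg2 := hg.differentiable_deriv_two
  have hR := tendsto_taylorRemainderRatio (x := x) hg1 hg2
    (hg.deriv' (n := 1)).continuous_deriv_one.continuousAt
  simpa using tendsto_integral_filter_of_dominated_convergence (l := 𝓝 0)
    (F := fun h t => taylorRemainderRatio g x (t * h) * (t ^ 2 * k t)) (f := fun _ => 0)
    (fun t => 2 * M * ‖t ^ 2 * k t‖)
    (Eventually.of_forall fun h => ((measurable_taylorRemainderRatio hg1.continuous).comp
      (measurable_id.mul_const h)).aestronglyMeasurable.mul hk_m2_int.aestronglyMeasurable)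
    (Eventually.of_forall fun h => Eventually.of_forall fun t => by
      rw [norm_mul]
      exact mul_le_mul_of_nonneg_right (abs_taylorRemainderRatio_le_two_mul hg1 hg2 hM _)
        (norm_nonneg _))
    (hk_m2_int.norm.const_mul _)
    (Eventually.of_forall fun t => by
      simpa using (hR.comp ((continuous_const_mul (M := ℝ) t).tendsto' 0 0 (mul_zero t))).mul_const
        (t ^ 2 * k t))

lemma integral_mul_comp_sub_sub_isLittleO (hg : ContDiff ℝ 2 g) {M : ℝ}
    (hM : ∀ y, |deriv (deriv g) y| ≤ M) (hk : Integrable k) (hk_one : ∫ s, k s = 1)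
    (hk_m1_int : Integrable (fun s => s * k s)) (hk_m1 : ∫ s, s * k s = 0)
    (hk_m2_int : Integrable (fun s => s ^ 2 * k s)) :
    (fun h => (∫ t, k t * g (x - t * h)) - g x
        - h ^ 2 * (deriv (deriv g) x * (∫ t, t ^ 2 * k t) / 2)) =o[𝓝 0] fun h => h ^ 2 := by
  rw [funext (integral_mul_comp_sub_sub_eq_integral_taylorRemainderRatio x hg hM hk hk_one
    hk_m1_int hk_m1 hk_m2_int)]
  simpa using (isBigO_refl (fun h : ℝ => h ^ 2) _).mul_isLittleO
    ((isLittleO_one_iff ℝ).mpr (tendsto_integral_taylorRemainderRatio x hg hM hk_m2_int))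

end Smoothing

lemma div_sub_div_sub_mul_isLittleO {α : Type*} {l : Filter α} {r A B : α → ℝ} {a₀ a₁ b₀ b₁ : ℝ}
    (hr : Tendsto r l (𝓝 0)) (hb₀ : b₀ ≠ 0)
    (hA : (fun h => A h - a₀ - r h * a₁) =o[l] r) (hB : (fun h => B h - b₀ - r h * b₁) =o[l] r) :
    (fun h => A h / B h - a₀ / b₀ - r h * ((a₁ * b₀ - a₀ * b₁) / b₀ ^ 2)) =o[l] r := by
  have hB₀ : Tendsto B l (𝓝 b₀) := by
    simpa using ((hB.trans_tendsto hr).add (hr.mul_const b₁)).add_const b₀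
  have hBb₀ : (fun h => r h * (B h - b₀)) =o[l] r := by
    simpa using (isBigO_refl r l).mul_isLittleO
      ((isLittleO_one_iff ℝ).mpr (by simpa using hB₀.sub_const b₀))
  have hnum : (fun h => b₀ * (A h - a₀ - r h * a₁) - a₀ * (B h - b₀ - r h * b₁)
      - (a₁ * b₀ - a₀ * b₁) / b₀ * (r h * (B h - b₀))) =o[l] r :=
    ((hA.const_mul_left b₀).sub (hB.const_mul_left a₀)).sub (hBb₀.const_mul_left _)
  have hden : (fun h => (B h * b₀)⁻¹) =O[l] (fun _ => (1 : ℝ)) :=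
    ((hB₀.mul_const b₀).inv₀ (mul_ne_zero hb₀ hb₀)).isBigO_one ℝ
  refine (hnum.mul_isBigO hden).congr' ?_ (Eventually.of_forall fun h => mul_one _)
  filter_upwards [hB₀.eventually_ne hb₀] with h hBh
  field_simp
  ring

lemma deriv_deriv_div_one_sub_sub {f F : ℝ → ℝ} {x : ℝ} (hf : ContDiffAt ℝ 2 f x)
    (hF : ContDiffAt ℝ 2 F x) (hFx : F x ≠ 1) :
    deriv (deriv (fun y => f y / (1 - F y))) x
        - 2 * deriv (fun y => f y / (1 - F y)) x * deriv F x / (1 - F x)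
      = (deriv (deriv f) x + f x / (1 - F x) * deriv (deriv F) x) / (1 - F x) := by
  have hD : 1 - F x ≠ 0 := sub_ne_zero.mpr hFx.symm
  have hG : ContDiffAt ℝ 2 (fun y => 1 - F y) x := contDiffAt_const.sub hF
  have hq : ContDiffAt ℝ 2 (fun y => f y / (1 - F y)) x := hf.div hG hD
  have hfeq : f =ᶠ[𝓝 x] fun y => f y / (1 - F y) * (1 - F y) := by
    filter_upwards [hG.continuousAt.eventually_ne hD] with y hy
    rw [div_mul_cancel₀ _ hy]
  have leibniz : deriv (deriv f) x = deriv (deriv (fun y => f y / (1 - F y))) x * (1 - F x)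
      - 2 * deriv (fun y => f y / (1 - F y)) x * deriv F x
      - f x / (1 - F x) * deriv (deriv F) x := by
    have h2 := hfeq.iteratedDeriv_eq 2
    rw [iteratedDeriv_fun_mul hq hG] at h2
    norm_num [Finset.sum_range_succ, iteratedDeriv_succ, deriv_const_sub'] at h2
    linarith
  rw [leibniz]
  field_simp
  ring

theorem hazard_bias_expansion_general
    (f F k : ℝ → ℝ)
    (hf : ContDiff ℝ 2 f) (hF : ContDiff ℝ 2 F)
    (hbdd : ∃ M : ℝ, ∀ y, |deriv (deriv f) y| ≤ M ∧ |deriv (deriv F) y| ≤ M)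
    (x : ℝ) (hFx : F x < 1)
    (hk_int : Integrable k) (hk_one : ∫ s, k s = 1)
    (hk_m1_int : Integrable (fun s => s * k s)) (hk_m1 : ∫ s, s * k s = 0)
    (hk_m2_int : Integrable (fun s => s ^ 2 * k s)) :
    (fun h : ℝ =>
        (∫ t, k t * f (x - t * h)) / (1 - ∫ t, k t * F (x - t * h))
          - f x / (1 - F x)
          - h ^ 2 / 2 *
            (deriv (deriv (fun y => f y / (1 - F y))) x
              - 2 * deriv (fun y => f y / (1 - F y)) x * deriv F x / (1 - F x)) *
            ∫ t, t ^ 2 * k t)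
      =o[𝓝[>] (0 : ℝ)] fun h => h ^ 2 := by
  obtain ⟨M, hM⟩ := hbdd
  have hfh := integral_mul_comp_sub_sub_isLittleO x hf (fun y => (hM y).1) hk_int hk_one
    hk_m1_int hk_m1 hk_m2_int
  have hFh := integral_mul_comp_sub_sub_isLittleO x hF (fun y => (hM y).2) hk_int hk_one
    hk_m1_int hk_m1 hk_m2_int
  have hB : (fun h => (1 - ∫ t, k t * F (x - t * h)) - (1 - F x)
      - h ^ 2 * -(deriv (deriv F) x * (∫ t, t ^ 2 * k t) / 2)) =o[𝓝 0] fun h => h ^ 2 :=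
    hFh.neg_left.congr_left fun h => by ring
  have hD : 1 - F x ≠ 0 := sub_ne_zero.mpr hFx.ne'
  have hquot := div_sub_div_sub_mul_isLittleO
    ((continuous_pow 2).tendsto' 0 0 (zero_pow two_ne_zero)) hD hfh hB
  refine (hquot.congr_left fun h => ?_).mono nhdsWithin_le_nhds
  rw [deriv_deriv_div_one_sub_sub hf.contDiffAt hF.contDiffAt hFx.ne]
  congr 1
  field_simp
  ring

/-- Bias expansion of the smoothed hazard rate: with `λ = f/(1-F)`, `F' = f`, and a
kernel `k` with zero first moment and finite second moment, the smoothed quantities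
`f_h(x) = ∫ k(t) f(x-th) dt` and `F_h(x) = ∫ k(t) F(x-th) dt` satisfy, as `h → 0⁺`,
`f_h(x)/(1-F_h(x)) - λ(x) = (h²/2)[λ''(x) - 2λ'(x)F'(x)/(1-F(x))] ∫ t²k(t)dt + o(h²)`. -/
theorem hazard_bias_expansion
    (f F k : ℝ → ℝ)
    (hf : ContDiff ℝ 2 f) (hF : ContDiff ℝ 2 F)
    (hF' : ∀ y, deriv F y = f y)
    (hbdd : ∃ M : ℝ, ∀ y, |deriv (deriv f) y| ≤ M ∧ |deriv (deriv F) y| ≤ M)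
    (x : ℝ) (hFx : F x < 1)
    (hk_int : Integrable k) (hk_nonneg : ∀ s, 0 ≤ k s) (hk_one : ∫ s, k s = 1)
    (hk_m1_int : Integrable (fun s => s * k s)) (hk_m1 : ∫ s, s * k s = 0)
    (hk_m2_int : Integrable (fun s => s ^ 2 * k s)) :
    (fun h : ℝ =>
        (∫ t, k t * f (x - t * h)) / (1 - ∫ t, k t * F (x - t * h))
          - f x / (1 - F x)
          - h ^ 2 / 2 *
            (deriv (deriv (fun y => f y / (1 - F y))) x
              - 2 * deriv (fun y => f y / (1 - F y)) x * deriv F x / (1 - F x)) *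
            ∫ t, t ^ 2 * k t)
      =o[𝓝[>] (0 : ℝ)] fun h => h ^ 2 :=
  hazard_bias_expansion_general f F k hf hF hbdd x hFx hk_int hk_one hk_m1_int hk_m1 hk_m2_int
end
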